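/- (Carleson Embedding Theorem with sharp constant) Let μ be a Radon measure on ℝ^N and let nonnegative numbers a_I, I ∈ D, satisfy the Carleson condition Σ_{I∈D, I⊆J} a_I ≤ A·μ(J) for every J ∈ D. Then for every measurable f ≥ 0 and every p ∈ (1,∞), Σ_{I∈D} ( μ(I)⁻¹ ∫_I f dμ )^p · a_I ≤ (p′)^p · A · ‖f‖^p_{L^p(μ)}, where p′ = p/(p−1) (terms with μ(I) = 0 are omitted from the sum). -/

import Mathlib

open MeasureTheory Set Matrix
open scoped ENNReal BigOperators NNReal Pointwise

noncomputable section

namespace CBD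

/-- The Euclidean norm of a vector in `ℝ^n` given as a plain function. -/
def vnorm {n : ℕ} (v : Fin n → ℝ) : ℝ := Real.sqrt (∑ i, v i ^ 2)

/-- An axis-parallel half-open cube in `ℝ^N`. -/
structure Cube (N : ℕ) where
  corner : Fin N → ℝ
  side : ℝ
  side_pos : 0 < side

namespace Cube

variable {N : ℕ}

/-- The subset of `ℝ^N` determined by the cube. -/
def set (Q : Cube N) : Set (Fin N → ℝ) :=
  {x | ∀ i, Q.corner i ≤ x i ∧ x i < Q.corner i + Q.side}

/-- The volume `|Q|` of the cube. -/
def vol (Q : Cube N) : ℝ := Q.side ^ N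

/-- The concentric dilation `rQ` (intended for `r ≥ 1`; implemented with `max r 1`). -/
def dilate (Q : Cube N) (r : ℝ) : Cube N where
  corner := fun i => Q.corner i + Q.side / 2 - max r 1 * Q.side / 2
  side := max r 1 * Q.side
  side_pos := mul_pos (lt_of_lt_of_le one_pos (le_max_right r 1)) Q.side_pos

/-- `Q` belongs to the standard dyadic lattice `D`:
`Q = 2^{-k}([0,1)^N + m)` for some `k ∈ ℤ`, `m ∈ ℤ^N`. -/
def IsDyadic (Q : Cube N) : Prop :=
  ∃ (k : ℤ) (m : Fin N → ℤ), Q.side = (2:ℝ) ^ (-k) ∧ ∀ i, Q.corner i = (2:ℝ) ^ (-k) * (m i : ℝ)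

/-- The subcube of `Q` of dyadic generation `k` in position `m`. -/
def subCube (Q : Cube N) (k : ℕ) (m : Fin N → ℕ) : Cube N where
  corner := fun i => Q.corner i + Q.side * (m i : ℝ) / 2 ^ k
  side := Q.side / 2 ^ k
  side_pos := div_pos Q.side_pos (by positivity)

/-- `R` is a dyadic subcube of `Q` (relative dyadic lattice `D(Q)`, including `Q` itself). -/
def IsDyadicSub (Q R : Cube N) : Prop :=
  ∃ (k : ℕ) (m : Fin N → ℕ), (∀ i, m i < 2 ^ k) ∧ R = Q.subCube k m

end Cube

variable {N d : ℕ}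

/-- The dyadic lattice, as a set of cubes. -/
def dyadicCubes (N : ℕ) : Set (Cube N) := {Q | Q.IsDyadic}

/-- All cubes in `ℝ^N`. -/
def allCubes (N : ℕ) : Set (Cube N) := Set.univ

/-- The average `⟨g⟩_Q = |Q|⁻¹ ∫_Q g`. -/
def avg (Q : Cube N) (g : (Fin N → ℝ) → ℝ) : ℝ :=
  (Q.vol)⁻¹ * ∫ y in Q.set, g y

/-- The entrywise average `⟨W⟩_Q` of a matrix-valued function. -/
def matAvg (Q : Cube N) (W : (Fin N → ℝ) → Matrix (Fin d) (Fin d) ℝ) :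
    Matrix (Fin d) (Fin d) ℝ :=
  Matrix.of fun i j => avg Q fun x => W x i j

/-- The positive semidefinite square root of a matrix (junk value `0` off psd matrices). -/
def msqrt (A : Matrix (Fin d) (Fin d) ℝ) : Matrix (Fin d) (Fin d) ℝ :=
  letI := Classical.dec A.PosSemidef
  if h : A.PosSemidef then
    h.1.eigenvectorUnitary.1 * diagonal ((↑) ∘ (h.1.eigenvalues · |>.sqrt)) *
      (star h.1.eigenvectorUnitary : Matrix (Fin d) (Fin d) ℝ)
  else 0

/-- The `ℓ² → ℓ²` operator norm of a `d × d` matrix. -/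
def matOpNorm (A : Matrix (Fin d) (Fin d) ℝ) : ℝ :=
  sSup {t | ∃ v : Fin d → ℝ, vnorm v ≤ 1 ∧ t = vnorm (A.mulVec v)}

/-- A `d`-dimensional matrix weight: locally integrable, positive semidefinite values. -/
def IsMatrixWeight (W : (Fin N → ℝ) → Matrix (Fin d) (Fin d) ℝ) : Prop :=
  (∀ x, (W x).PosSemidef) ∧ ∀ i j, LocallyIntegrable (fun x => W x i j) volume

/-- A scalar weight: nonnegative and locally integrable. -/
def IsScalarWeight (w : (Fin N → ℝ) → ℝ) : Prop :=
  (∀ x, 0 ≤ w x) ∧ LocallyIntegrable w volume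

/-- The maximal function adapted to the cube `Q`:
`M_Q w(x) = sup {⟨w⟩_R : R ∈ D(Q), x ∈ R}` (and `0` off `Q`). -/
def MQ (Q : Cube N) (w : (Fin N → ℝ) → ℝ) (x : Fin N → ℝ) : ℝ :=
  sSup ({0} ∪ {t | ∃ R : Cube N, Q.IsDyadicSub R ∧ x ∈ R.set ∧ t = avg R w})

/-- Admissible `A∞` constants of a scalar weight, over a collection `𝒬` of cubes. -/
def AinftyOn (𝒬 : Set (Cube N)) (w : (Fin N → ℝ) → ℝ) : Set ℝ :=
  {C | 0 ≤ C ∧ ∀ Q ∈ 𝒬, avg Q (MQ Q w) ≤ C * avg Q w}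

/-- The `A∞` characteristic (best admissible constant) of a scalar weight. -/
def AinftyChar (𝒬 : Set (Cube N)) (w : (Fin N → ℝ) → ℝ) : ℝ := sInf (AinftyOn 𝒬 w)

/-- The scalar weight `w_e(x) = (W(x)e, e)` associated to a matrix weight and `e ∈ ℝ^d`. -/
def we (W : (Fin N → ℝ) → Matrix (Fin d) (Fin d) ℝ) (e : Fin d → ℝ) :
    (Fin N → ℝ) → ℝ := fun x => e ⬝ᵥ (W x).mulVec e

/-- Admissible constants for the scalar `A∞` characteristic of a matrix weight. -/
def matAinftyScOn (𝒬 : Set (Cube N)) (W : (Fin N → ℝ) → Matrix (Fin d) (Fin d) ℝ) : Set ℝ :=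
  {C | 0 ≤ C ∧ ∀ e : Fin d → ℝ, ∀ Q ∈ 𝒬, avg Q (MQ Q (we W e)) ≤ C * avg Q (we W e)}

/-- The scalar `A∞` characteristic `[W]^{sc}_{A∞} = sup_e [w_e]_{A∞}` of a matrix weight. -/
def matAinftyScChar (𝒬 : Set (Cube N)) (W : (Fin N → ℝ) → Matrix (Fin d) (Fin d) ℝ) : ℝ :=
  sInf (matAinftyScOn 𝒬 W)

/-- Admissible constants for the two-weight matrix `A₂` characteristic
`[W,V]_{A₂} = sup_Q ‖⟨W⟩_Q^{1/2} ⟨V⟩_Q^{1/2}‖²`. -/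
def A2pairOn (𝒬 : Set (Cube N)) (W V : (Fin N → ℝ) → Matrix (Fin d) (Fin d) ℝ) : Set ℝ :=
  {C | ∀ Q ∈ 𝒬, matOpNorm (msqrt (matAvg Q W) * msqrt (matAvg Q V)) ^ 2 ≤ C}

/-- The two-weight matrix `A₂` characteristic. -/
def A2pairChar (𝒬 : Set (Cube N)) (W V : (Fin N → ℝ) → Matrix (Fin d) (Fin d) ℝ) : ℝ :=
  sInf (A2pairOn 𝒬 W V)

/-- Admissible constants for the scalar `A₂` characteristic `sup_Q ⟨w⟩_Q ⟨w⁻¹⟩_Q`. -/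
def scalarA2On (𝒬 : Set (Cube N)) (w : (Fin N → ℝ) → ℝ) : Set ℝ :=
  {C | ∀ Q ∈ 𝒬, avg Q w * avg Q (fun x => (w x)⁻¹) ≤ C}

/-- The scalar `A₂` characteristic. -/
def scalarA2Char (𝒬 : Set (Cube N)) (w : (Fin N → ℝ) → ℝ) : ℝ := sInf (scalarA2On 𝒬 w)

/-- An `ω`-Calderón–Zygmund operator on `ℝ^N`: a linear operator, bounded on `L²`,
with a kernel representation off the support, whose kernel satisfies the standard size
condition and the `ω`-smoothness condition, `ω` being a modulus of continuity. -/
structure CZO (N : ℕ) where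
  op : ((Fin N → ℝ) → ℝ) →ₗ[ℝ] ((Fin N → ℝ) → ℝ)
  K : (Fin N → ℝ) → (Fin N → ℝ) → ℝ
  ω : ℝ → ℝ
  CK : ℝ
  normBound : ℝ
  bounded : ∀ f : (Fin N → ℝ) → ℝ, MemLp f 2 volume →
    MemLp (op f) 2 volume ∧
      eLpNorm (op f) 2 volume ≤ ENNReal.ofReal normBound * eLpNorm f 2 volume
  repr : ∀ f : (Fin N → ℝ) → ℝ, MemLp f 2 volume → ∀ x ∉ tsupport f,
    op f x = ∫ y, K x y * f y
  size : ∀ x y : Fin N → ℝ, x ≠ y → |K x y| ≤ CK / vnorm (x - y) ^ N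
  smooth : ∀ x x' y : Fin N → ℝ, x ≠ y → vnorm (x - x') ≤ vnorm (x - y) / 2 →
    |K x y - K x' y| + |K y x - K y x'| ≤
      ω (vnorm (x - x') / vnorm (x - y)) / vnorm (x - y) ^ N
  omega_zero : ω 0 = 0
  omega_mono : MonotoneOn ω (Set.Ici 0)
  omega_subadd : ∀ s t : ℝ, 0 ≤ s → 0 ≤ t → ω (s + t) ≤ ω s + ω t

/-- The Dini condition `∫₀¹ ω(t) dt/t < ∞` for a modulus of continuity. -/
def Dini (ω : ℝ → ℝ) : Prop :=
  IntegrableOn (fun t => ω t / t) (Set.Ioc (0:ℝ) 1) volume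

/-- Componentwise (i.e. `T ⊗ I_d`) action of a scalar operator on vector-valued functions. -/
def vecApply (T : ((Fin N → ℝ) → ℝ) → ((Fin N → ℝ) → ℝ))
    (f : (Fin N → ℝ) → Fin d → ℝ) : (Fin N → ℝ) → Fin d → ℝ :=
  fun x i => T (fun y => f y i) x

/-- `T` maps `L²` to `L²` with operator norm at most `M`. -/
def L2OpNormLe (T : ((Fin N → ℝ) → ℝ) → ((Fin N → ℝ) → ℝ)) (M : ℝ) : Prop :=
  ∀ f : (Fin N → ℝ) → ℝ, MemLp f 2 volume →
    MemLp (T f) 2 volume ∧ eLpNorm (T f) 2 volume ≤ ENNReal.ofReal M * eLpNorm f 2 volume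

/-- `T` is bounded on `L²`. -/
def L2Bounded (T : ((Fin N → ℝ) → ℝ) → ((Fin N → ℝ) → ℝ)) : Prop :=
  ∃ M : ℝ, L2OpNormLe T M

/-- The family of kernels of a (generalized big) Haar shift of complexity `r`:
`K_Q` is supported on `Q × Q`, bounded by `|Q|⁻¹`, constant on products of
`(r+1)`-st generation dyadic subcubes of `Q`, and vanishes for non-dyadic `Q`. -/
structure HaarShiftKernel (N : ℕ) (r : ℕ) where
  K : Cube N → (Fin N → ℝ) → (Fin N → ℝ) → ℝ
  measK : ∀ Q : Cube N, Measurable (Function.uncurry (K Q))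
  suppK : ∀ Q : Cube N, ∀ x y, K Q x y ≠ 0 → x ∈ Q.set ∧ y ∈ Q.set
  bddK : ∀ Q : Cube N, ∀ x y, |K Q x y| ≤ (Cube.vol Q)⁻¹
  constK : ∀ Q : Cube N, ∀ m m' : Fin N → ℕ,
    (∀ i, m i < 2 ^ (r + 1)) → (∀ i, m' i < 2 ^ (r + 1)) →
    ∀ x x' y y', x ∈ (Q.subCube (r + 1) m).set → x' ∈ (Q.subCube (r + 1) m).set →
      y ∈ (Q.subCube (r + 1) m').set → y' ∈ (Q.subCube (r + 1) m').set →
      K Q x y = K Q x' y'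
  dyadicK : ∀ Q : Cube N, ¬Q.IsDyadic → K Q = 0

/-- The operator `𝕊 = Σ_{Q ∈ D} T_Q` associated to a family of Haar shift kernels. -/
def hsApply {r : ℕ} (S : HaarShiftKernel N r) (f : (Fin N → ℝ) → ℝ) : (Fin N → ℝ) → ℝ :=
  fun x => ∑' Q : Cube N, ∫ y, S.K Q x y * f y

/-- The cancellation conditions `T_Q 1_Q = 0`, `T_Q^* 1_Q = 0` making a generalized
big Haar shift a big Haar shift. -/
def IsBigShift {r : ℕ} (S : HaarShiftKernel N r) : Prop :=
  (∀ Q : Cube N, ∀ x, (∫ y, S.K Q x y) = 0) ∧ (∀ Q : Cube N, ∀ y, (∫ x, S.K Q x y) = 0)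

/-- The sublattice `D̃ = ∪_j D_{k+(r+1)j}` of the dyadic lattice. -/
def Dtilde (N r k : ℕ) : Set (Cube N) :=
  {Q | Q.IsDyadic ∧ ∃ j : ℤ, Q.side = (2:ℝ) ^ (-((k : ℤ) + (r + 1) * j))}

/-- The Haar shift is `r`-separated with lattice parameter `k`:
`T_Q ≠ 0` only for `Q ∈ D̃`. -/
def SeparatedKernel {r : ℕ} (S : HaarShiftKernel N r) (k : ℕ) : Prop :=
  ∀ Q : Cube N, S.K Q ≠ 0 → Q ∈ Dtilde N r k

/-- The martingale difference `Δ_R b = Σ_{R' child of R} ⟨b⟩_{R'} 1_{R'} - ⟨b⟩_R 1_R`. -/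
def haarDelta (R : Cube N) (b : (Fin N → ℝ) → ℝ) (x : Fin N → ℝ) : ℝ :=
  (∑ m : Fin N → Fin 2, Set.indicator (R.subCube 1 fun i => (m i : ℕ)).set
      (fun _ => avg (R.subCube 1 fun i => (m i : ℕ)) b) x)
    - Set.indicator R.set (fun _ => avg R b) x

/-- The paraproduct of order `r` with symbol `b`:
`Π_b^r f = Σ_{Q ∈ D} ⟨f⟩_Q Σ_{R ∈ ch^r Q} Δ_R b`. -/
def paraApply (r : ℕ) (b f : (Fin N → ℝ) → ℝ) : (Fin N → ℝ) → ℝ :=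
  fun x => ∑' Q : dyadicCubes N,
    avg Q.val f * ∑ m : Fin N → Fin (2 ^ r), haarDelta (Q.val.subCube r fun i => (m i : ℕ)) b x

/-- The paraproduct `Π_b^r` is `r`-separated with lattice parameter `k`. -/
def SeparatedPara (r : ℕ) (b : (Fin N → ℝ) → ℝ) (k : ℕ) : Prop :=
  ∀ Q : Cube N, Q.IsDyadic →
    (∃ x, (∑ m : Fin N → Fin (2 ^ r), haarDelta (Q.subCube r fun i => (m i : ℕ)) b x) ≠ 0) →
    Q ∈ Dtilde N r k

/-- `T` is a big Haar shift of complexity `r`, or a paraproduct of order `r`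
with `L²` norm at most `2^{-Nr/2}`. -/
def IsShiftOrParaproduct (N r : ℕ) (T : ((Fin N → ℝ) → ℝ) → ((Fin N → ℝ) → ℝ)) : Prop :=
  (∃ S : HaarShiftKernel N r, IsBigShift S ∧ L2Bounded (hsApply S) ∧ T = hsApply S) ∨
  (∃ b : (Fin N → ℝ) → ℝ, LocallyIntegrable b volume ∧
      L2OpNormLe (paraApply r b) (Real.sqrt ((2:ℝ) ^ (N * r)))⁻¹ ∧ T = paraApply r b)

/-- `T` is an `r`-separated big Haar shift of complexity `r`, or an `r`-separated
paraproduct of order `r` with `L²` norm at most `2^{-Nr/2}`; `k ≤ r` is the lattice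
parameter of the separation sublattice `D̃`. -/
def IsSeparatedShiftOrParaproduct (N r k : ℕ)
    (T : ((Fin N → ℝ) → ℝ) → ((Fin N → ℝ) → ℝ)) : Prop :=
  k ≤ r ∧
  ((∃ S : HaarShiftKernel N r, IsBigShift S ∧ L2Bounded (hsApply S) ∧
      SeparatedKernel S k ∧ T = hsApply S) ∨
   (∃ b : (Fin N → ℝ) → ℝ, LocallyIntegrable b volume ∧
      L2OpNormLe (paraApply r b) (Real.sqrt ((2:ℝ) ^ (N * r)))⁻¹ ∧
      SeparatedPara r b k ∧ T = paraApply r b))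

/-- The convex-body average `⟨⟨f⟩⟩_Q = {⟨φ f⟩_Q : ‖φ‖_∞ ≤ 1}`. -/
def cbAvg (Q : Cube N) (f : (Fin N → ℝ) → Fin d → ℝ) : Set (Fin d → ℝ) :=
  {v | ∃ φ : (Fin N → ℝ) → ℝ, Measurable φ ∧ (∀ x, |φ x| ≤ 1) ∧
        v = fun i => avg Q fun x => φ x * f x i}

/-- A weakly `η`-sparse family of cubes: there are pairwise disjoint measurable
subsets `E_Q ⊆ Q` with `|E_Q| ≥ η |Q|`. -/
def WeaklySparse (S : Set (Cube N)) (η : ℝ) : Prop :=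
  ∃ E : Cube N → Set (Fin N → ℝ),
    (∀ Q ∈ S, E Q ⊆ Q.set ∧ MeasurableSet (E Q) ∧ ENNReal.ofReal (η * Q.vol) ≤ volume (E Q)) ∧
    S.PairwiseDisjoint E

/-- The value at `x` of the convex-body sparse operator
`𝐋_S f = Σ_{Q ∈ S} ⟨⟨f⟩⟩_Q 1_Q` (an infinite Minkowski sum): all convergent sums
`Σ_Q g(Q)` with `g(Q) ∈ ⟨⟨f⟩⟩_Q` whenever `Q ∈ S` contains `x`, and `g(Q) = 0` otherwise. -/
def sparseBody (S : Set (Cube N)) (f : (Fin N → ℝ) → Fin d → ℝ) (x : Fin N → ℝ) :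
    Set (Fin d → ℝ) :=
  {v | ∃ g : Cube N → Fin d → ℝ,
        (∀ Q : Cube N, Q ∈ S ∧ x ∈ Q.set → g Q ∈ cbAvg Q f) ∧
        (∀ Q : Cube N, ¬(Q ∈ S ∧ x ∈ Q.set) → g Q = 0) ∧ HasSum g v}

/-- The `S`-children of `Q`: maximal cubes of `S` strictly contained in `Q`. -/
def sChildren (S : Set (Cube N)) (Q : Cube N) : Set (Cube N) :=
  {R | R ∈ S ∧ R.set ⊂ Q.set ∧ ¬∃ R' ∈ S, R.set ⊂ R'.set ∧ R'.set ⊂ Q.set}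

/-- A classical `ε`-sparse family of dyadic cubes: `Σ_{R ∈ ch_S(Q)} |R| ≤ ε |Q|`. -/
def EpsSparse (S : Set (Cube N)) (ε : ℝ) : Prop :=
  (∀ Q ∈ S, Q.IsDyadic) ∧
  ∀ Q ∈ S, ∀ F : Finset (Cube N), ↑F ⊆ sChildren S Q → ∑ R ∈ F, R.vol ≤ ε * Q.vol

/-- A dyadic `λ`-Carleson family: `Σ_{R ∈ S, R ⊆ Q} |R| ≤ λ |Q|` for all `Q ∈ S`. -/
def DyadicCarleson (S : Set (Cube N)) (lam : ℝ) : Prop :=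
  (∀ Q ∈ S, Q.IsDyadic) ∧
  ∀ Q ∈ S, ∀ F : Finset (Cube N), (↑F ⊆ {R | R ∈ S ∧ R.set ⊆ Q.set}) →
    ∑ R ∈ F, R.vol ≤ lam * Q.vol

/-- A simple sparse family: every cube of `S` has at most one `S`-child. -/
def SimpleSparse (S : Set (Cube N)) : Prop :=
  (∀ Q ∈ S, Q.IsDyadic) ∧ ∀ Q ∈ S, (sChildren S Q).Subsingleton

end CBD

end

/-!
Let `M x` be the largest average `⟨f⟩_I` over the cubes `I ∈ F` containing `x`. At a level
`t > 0`, the cubes with `⟨f⟩_I > t` are covered by the maximal ones among them; these are pairwise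
disjoint because dyadic cubes are nested or disjoint, and they tile `{M > t}`. Summing the Carleson
condition over them gives `∑_{⟨f⟩_I > t} a_I ≤ A μ{M > t}`, so by the layer-cake formula the left
side is at most `A ∫ M^p`; summing `t μ(J) ≤ ∫_J f` over them gives the weak bound
`t μ{M > t} ≤ ∫_{M > t} f`. Doob's argument turns the weak bound into
`∫ M^p ≤ p' ∫ f M^{p-1} ≤ p' ‖f‖_p ‖M‖_p^{p-1}`, that is `‖M‖_p ≤ p' ‖f‖_p`.
-/

section

variable {α ι : Type*}

theorem ENNReal.le_rpow_of_le_mul_rpow {p q : ℝ} (hpq : p.HolderConjugate q) {L C : ℝ≥0∞}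
    (hL : L ≠ ∞) (h : L ≤ C * L ^ (1 / q)) : L ≤ C ^ p := by
  rcases eq_or_ne L 0 with rfl | hL0
  · exact zero_le
  have hLq0 : L ^ (1 / q) ≠ 0 := by simp [hL0, hL, hpq.symm.pos]
  have hLq : L ^ (1 / q) ≠ ∞ := by simp [hL0, hL]
  have hsplit : L = L ^ (1 / p) * L ^ (1 / q) := by
    rw [← ENNReal.rpow_add _ _ hL0 hL, one_div, one_div, hpq.inv_add_inv_eq_one,
      ENNReal.rpow_one]
  have hLp : L ^ (1 / p) ≤ C := by
    rw [← ENNReal.mul_le_mul_iff_left hLq0 hLq, ← hsplit]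
    exact h
  calc L = (L ^ (1 / p)) ^ p := by
        rw [← ENNReal.rpow_mul, one_div_mul_cancel hpq.ne_zero, ENNReal.rpow_one]
    _ ≤ C ^ p := ENNReal.rpow_le_rpow hLp hpq.nonneg

theorem lintegral_rpow_le_mul_lintegral_mul_rpow_sub_one [MeasurableSpace α] {μ : Measure α}
    {M : α → ℝ} (hM0 : 0 ≤ M) (hM : Measurable M) {g : α → ℝ≥0∞} (hg : Measurable g) {p : ℝ}
    (hp : 1 < p)
    (hweak : ∀ t : ℝ, 0 < t →
      ENNReal.ofReal t * μ {x | t < M x} ≤ ∫⁻ x in {x | t < M x}, g x ∂μ) :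
    ∫⁻ x, ENNReal.ofReal (M x ^ p) ∂μ ≤
      ENNReal.ofReal (p / (p - 1)) * ∫⁻ x, g x * ENNReal.ofReal (M x ^ (p - 1)) ∂μ := by
  have hp0 : 0 < p := by linarith
  have hp1 : 0 < p - 1 := by linarith
  set ν := μ.withDensity g
  have hlevel : ∫⁻ t in Ioi 0, μ {x | t < M x} * ENNReal.ofReal (t ^ (p - 1)) ≤
      ∫⁻ t in Ioi 0, ν {x | t < M x} * ENNReal.ofReal (t ^ (p - 1 - 1)) := by
    refine setLIntegral_mono' measurableSet_Ioi fun t (ht : 0 < t) => ?_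
    rw [withDensity_apply _ (measurableSet_lt measurable_const hM)]
    calc μ {x | t < M x} * ENNReal.ofReal (t ^ (p - 1))
        = ENNReal.ofReal t * μ {x | t < M x} * ENNReal.ofReal (t ^ (p - 1 - 1)) := by
          rw [mul_comm (ENNReal.ofReal t), mul_assoc, ← ENNReal.ofReal_mul ht.le,
            ← Real.rpow_one_add' ht.le (by linarith), add_sub_cancel]
      _ ≤ _ := by gcongr; exact hweak t ht
  calc ∫⁻ x, ENNReal.ofReal (M x ^ p) ∂μ
      = ENNReal.ofReal p * ∫⁻ t in Ioi 0, μ {x | t < M x} * ENNReal.ofReal (t ^ (p - 1)) :=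
        lintegral_rpow_eq_lintegral_meas_lt_mul μ (ae_of_all _ hM0) hM.aemeasurable hp0
    _ ≤ ENNReal.ofReal p * ∫⁻ t in Ioi 0, ν {x | t < M x} * ENNReal.ofReal (t ^ (p - 1 - 1)) := by
        gcongr
    _ = ENNReal.ofReal (p / (p - 1)) * ∫⁻ x, ENNReal.ofReal (M x ^ (p - 1)) ∂ν := by
        rw [lintegral_rpow_eq_lintegral_meas_lt_mul ν (ae_of_all _ hM0) hM.aemeasurable hp1,
          ← mul_assoc, ← ENNReal.ofReal_mul (by positivity), div_mul_cancel₀ _ hp1.ne']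
    _ = _ := by rw [lintegral_withDensity_eq_lintegral_mul _ hg (by fun_prop)]; rfl

theorem lintegral_rpow_le_of_mul_meas_lt_le_setLIntegral [MeasurableSpace α] {μ : Measure α}
    {M : α → ℝ} (hM0 : 0 ≤ M) (hM : Measurable M) {g : α → ℝ≥0∞} (hg : Measurable g) {p : ℝ}
    (hp : 1 < p) (hfin : ∫⁻ x, ENNReal.ofReal (M x ^ p) ∂μ ≠ ∞)
    (hweak : ∀ t : ℝ, 0 < t →
      ENNReal.ofReal t * μ {x | t < M x} ≤ ∫⁻ x in {x | t < M x}, g x ∂μ) :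
    ∫⁻ x, ENNReal.ofReal (M x ^ p) ∂μ ≤
      ENNReal.ofReal (p / (p - 1)) ^ p * ∫⁻ x, g x ^ p ∂μ := by
  have hp0 : 0 < p := by linarith
  have hp1 : 0 < p - 1 := by linarith
  have hpq : p.HolderConjugate (p / (p - 1)) := Real.HolderConjugate.conjExponent hp
  have hHolder : ∫⁻ x, g x * ENNReal.ofReal (M x ^ (p - 1)) ∂μ ≤
      (∫⁻ x, g x ^ p ∂μ) ^ (1 / p) *
        (∫⁻ x, ENNReal.ofReal (M x ^ p) ∂μ) ^ (1 / (p / (p - 1))) := by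
    simpa only [ENNReal.ofReal_rpow_of_nonneg (hM0 _) hp1.le,
      ENNReal.ofReal_rpow_of_nonneg (hM0 _) hp0.le] using
      ENNReal.lintegral_mul_rpow_le_lintegral_rpow_mul_lintegral_rpow (μ := μ) hpq
        hg.aemeasurable hM.ennreal_ofReal.aemeasurable
  calc ∫⁻ x, ENNReal.ofReal (M x ^ p) ∂μ
      ≤ (ENNReal.ofReal (p / (p - 1)) * (∫⁻ x, g x ^ p ∂μ) ^ (1 / p)) ^ p := by
        refine ENNReal.le_rpow_of_le_mul_rpow hpq hfin ?_
        rw [mul_assoc]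
        exact (lintegral_rpow_le_mul_lintegral_mul_rpow_sub_one hM0 hM hg hp hweak).trans
          (mul_le_mul_right hHolder _)
    _ = ENNReal.ofReal (p / (p - 1)) ^ p * ∫⁻ x, g x ^ p ∂μ := by
        rw [ENNReal.mul_rpow_of_nonneg _ _ hp0.le, ← ENNReal.rpow_mul,
          one_div_mul_cancel hp0.ne', ENNReal.rpow_one]

theorem sum_ofReal_rpow_mul_eq_lintegral (F : Finset ι) {c : ι → ℝ} (hc : 0 ≤ c) (w : ι → ℝ≥0∞)
    {p : ℝ} (hp : 0 < p) :
    ∑ i ∈ F, ENNReal.ofReal (c i ^ p) * w i =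
      ENNReal.ofReal p *
        ∫⁻ t in Ioi 0, (∑ i ∈ F with t < c i, w i) * ENNReal.ofReal (t ^ (p - 1)) := by
  -- the layer-cake formula for the discrete measure `∑ i ∈ F, w i • δ i`
  let _ : MeasurableSpace ι := ⊤
  have key := lintegral_rpow_eq_lintegral_meas_lt_mul (∑ i ∈ F, w i • Measure.dirac i)
    (ae_of_all _ hc) measurable_from_top.aemeasurable hp
  simp only [lintegral_finsetSum_measure, lintegral_smul_measure,
    lintegral_dirac' _ measurable_from_top, Measure.coe_finsetSum, Finset.sum_apply,
    Measure.smul_apply, Measure.dirac_apply' _ MeasurableSpace.measurableSet_top,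
    smul_eq_mul] at key
  simpa [Finset.sum_filter, Set.indicator_apply, mul_comm] using key

def IsLaminarOn (s : ι → Set α) (I : Set ι) : Prop :=
  ∀ i ∈ I, ∀ j ∈ I, s i ⊆ s j ∨ s j ⊆ s i ∨ Disjoint (s i) (s j)

theorem IsLaminarOn.mono {s : ι → Set α} {I J : Set ι} (h : IsLaminarOn s J) (hIJ : I ⊆ J) :
    IsLaminarOn s I :=
  fun i hi j hj => h i (hIJ hi) j (hIJ hj)

theorem IsLaminarOn.exists_pairwiseDisjoint_cover {s : ι → Set α} {G : Finset ι}
    (h : IsLaminarOn s G) :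
    ∃ G' ⊆ G, (G' : Set ι).PairwiseDisjoint s ∧ ∀ i ∈ G, ∃ j ∈ G', s i ⊆ s j := by
  classical
  induction G using Finset.induction_on with
  | empty => exact ⟨∅, subset_rfl, by simp, by simp⟩
  | @insert i G hi ih =>
    obtain ⟨G', hG'G, hdisj, hcover⟩ := ih (h.mono (by simp))
    by_cases hcov : ∃ j ∈ G', s i ⊆ s j
    · refine ⟨G', hG'G.trans (Finset.subset_insert _ _), hdisj, ?_⟩
      simp only [Finset.forall_mem_insert]
      exact ⟨hcov, hcover⟩
    push Not at hcov
    refine ⟨insert i (G'.filter fun j => ¬ s j ⊆ s i), ?_, ?_, ?_⟩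
    · exact Finset.insert_subset_insert _ ((Finset.filter_subset _ _).trans hG'G)
    · rw [Finset.coe_insert, Set.pairwiseDisjoint_insert]
      refine ⟨hdisj.subset (Finset.coe_subset.mpr (Finset.filter_subset _ _)), fun j hj _ => ?_⟩
      rw [Finset.coe_filter] at hj
      have hjG : j ∈ (insert i G : Set ι) := by simp [hG'G hj.1]
      rcases h i (by simp) j (by exact_mod_cast hjG) with hij | hji | hd
      · exact absurd hij (hcov j hj.1)
      · exact absurd hji hj.2
      · exact hd
    · rintro k hk
      rcases Finset.mem_insert.mp hk with rfl | hk
      · exact ⟨k, Finset.mem_insert_self _ _, subset_rfl⟩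
      obtain ⟨j, hj, hkj⟩ := hcover k hk
      by_cases hji : s j ⊆ s i
      · exact ⟨i, Finset.mem_insert_self _ _, hkj.trans hji⟩
      · exact ⟨j, Finset.mem_insert_of_mem (Finset.mem_filter.mpr ⟨hj, hji⟩), hkj⟩

noncomputable def supIndicator (F : Finset ι) (s : ι → Set α) (c : ι → ℝ≥0) : α → ℝ≥0 :=
  F.sup fun i => (s i).indicator fun _ => c i

section supIndicator

variable {F : Finset ι} {s : ι → Set α} {c : ι → ℝ≥0}

theorem lt_supIndicator_iff {t : ℝ} (ht : 0 ≤ t) {x : α} :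
    t < supIndicator F s c x ↔ ∃ i ∈ F, x ∈ s i ∧ t < c i := by
  lift t to ℝ≥0 using ht
  simp only [supIndicator, Finset.sup_apply, NNReal.coe_lt_coe, Finset.lt_sup_iff]
  refine exists_congr fun i => and_congr_right fun _ => ?_
  by_cases hx : x ∈ s i <;> simp [hx]

theorem supIndicator_le_sup (x : α) : supIndicator F s c x ≤ F.sup c := by
  simp only [supIndicator, Finset.sup_apply]
  exact Finset.sup_mono_fun fun i _ => indicator_le_self' (fun _ _ => zero_le) x

theorem measurable_supIndicator [MeasurableSpace α] (hs : ∀ i ∈ F, MeasurableSet (s i)) :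
    Measurable (supIndicator F s c) :=
  Finset.sup_induction measurable_const (fun _ h₁ _ h₂ => h₁.sup h₂)
    fun i hi => measurable_const.indicator (hs i hi)

theorem lintegral_supIndicator_rpow_ne_top [MeasurableSpace α] {μ : Measure α}
    (hs : ∀ i ∈ F, MeasurableSet (s i)) (hμs : ∀ i ∈ F, μ (s i) ≠ ∞) {p : ℝ} (hp : 0 < p) :
    ∫⁻ x, ENNReal.ofReal ((supIndicator F s c x : ℝ) ^ p) ∂μ ≠ ∞ := by
  set U := ⋃ i ∈ F, s i
  have hU : μ U ≠ ∞ := (measure_biUnion_finset_le F s).trans_lt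
    (ENNReal.sum_lt_top.mpr fun i hi => (hμs i hi).lt_top) |>.ne
  have hbound : ∀ x, ENNReal.ofReal ((supIndicator F s c x : ℝ) ^ p) ≤
      U.indicator (fun _ => ENNReal.ofReal (((F.sup c : ℝ≥0) : ℝ) ^ p)) x := by
    intro x
    by_cases hx : x ∈ U
    · rw [indicator_of_mem hx]
      gcongr
      exact supIndicator_le_sup x
    · have : (supIndicator F s c x : ℝ) = 0 := by
        refine le_antisymm (not_lt.mp fun h => hx ?_) (NNReal.coe_nonneg _)
        obtain ⟨i, hi, hxi, -⟩ := (lt_supIndicator_iff le_rfl).mp h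
        exact mem_biUnion hi hxi
      simp [this, Real.zero_rpow hp.ne', hx]
  refine ne_top_of_le_ne_top ?_ (lintegral_mono hbound)
  rw [lintegral_indicator (Finset.measurableSet_biUnion F hs), setLIntegral_const]
  exact ENNReal.mul_ne_top ENNReal.ofReal_ne_top hU

theorem exists_pairwiseDisjoint_setOf_lt_supIndicator (hlam : IsLaminarOn s F) {t : ℝ}
    (ht : 0 ≤ t) :
    ∃ G ⊆ F, (∀ j ∈ G, t < c j) ∧ (G : Set ι).PairwiseDisjoint s ∧
      (∀ i ∈ F, t < c i → ∃ j ∈ G, s i ⊆ s j) ∧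
      {x | t < supIndicator F s c x} = ⋃ j ∈ G, s j := by
  obtain ⟨G, hGF, hdisj, hcover⟩ := (hlam.mono (Finset.coe_subset.mpr
    (Finset.filter_subset (fun i => t < c i) F))).exists_pairwiseDisjoint_cover
  have hGlt : ∀ j ∈ G, t < c j := fun j hj => (Finset.mem_filter.mp (hGF hj)).2
  have hcover' : ∀ i ∈ F, t < c i → ∃ j ∈ G, s i ⊆ s j :=
    fun i hi hti => hcover i (Finset.mem_filter.mpr ⟨hi, hti⟩)
  refine ⟨G, hGF.trans (Finset.filter_subset _ _), hGlt, hdisj, hcover', ?_⟩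
  ext x
  simp only [mem_ofPred_eq, lt_supIndicator_iff ht, mem_iUnion₂, exists_prop]
  constructor
  · rintro ⟨i, hi, hxi, hti⟩
    obtain ⟨j, hj, hij⟩ := hcover' i hi hti
    exact ⟨j, hj, hij hxi⟩
  · rintro ⟨j, hj, hxj⟩
    exact ⟨j, (Finset.mem_filter.mp (hGF hj)).1, hxj, hGlt j hj⟩

end supIndicator

section Carleson

variable [MeasurableSpace α] {μ : Measure α} {F : Finset ι} {s : ι → Set α} {c : ι → ℝ≥0}

theorem sum_le_mul_measure_setOf_lt_supIndicator (hs : ∀ i ∈ F, MeasurableSet (s i))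
    (hlam : IsLaminarOn s F) {a : ι → ℝ≥0∞} {A : ℝ≥0∞}
    (hCar : ∀ j ∈ F, ∀ G ⊆ F, (∀ i ∈ G, s i ⊆ s j) → ∑ i ∈ G, a i ≤ A * μ (s j))
    {t : ℝ} (ht : 0 ≤ t) :
    ∑ i ∈ F with t < c i, a i ≤ A * μ {x | t < supIndicator F s c x} := by
  classical
  obtain ⟨G, hGF, -, hdisj, hcover, hset⟩ :=
    exists_pairwiseDisjoint_setOf_lt_supIndicator (c := c) hlam ht
  rw [hset, measure_biUnion_finset hdisj fun j hj => hs j (hGF hj), Finset.mul_sum]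
  calc ∑ i ∈ F with t < c i, a i
      ≤ ∑ i ∈ F with t < c i, ∑ j ∈ G with s i ⊆ s j, a i := by
        refine Finset.sum_le_sum fun i hi => ?_
        obtain ⟨j, hj, hij⟩ := hcover i (Finset.mem_filter.mp hi).1 (Finset.mem_filter.mp hi).2
        exact Finset.single_le_sum (f := fun _ => a i) (fun _ _ => zero_le)
          (Finset.mem_filter.mpr ⟨hj, hij⟩)
    _ = ∑ j ∈ G, ∑ i ∈ F with t < c i ∧ s i ⊆ s j, a i := by
        refine Finset.sum_comm' fun i j => ?_
        simp only [Finset.mem_filter]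
        tauto
    _ ≤ ∑ j ∈ G, A * μ (s j) :=
        Finset.sum_le_sum fun j hj => hCar j (hGF hj) _ (Finset.filter_subset _ _)
          fun i hi => (Finset.mem_filter.mp hi).2.2

theorem mul_measure_setOf_lt_supIndicator_le (hs : ∀ i ∈ F, MeasurableSet (s i))
    (hlam : IsLaminarOn s F) {g : α → ℝ≥0∞}
    (hc : ∀ i ∈ F, (c i : ℝ≥0∞) * μ (s i) ≤ ∫⁻ x in s i, g x ∂μ) {t : ℝ} (ht : 0 ≤ t) :
    ENNReal.ofReal t * μ {x | t < supIndicator F s c x} ≤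
      ∫⁻ x in {x | t < supIndicator F s c x}, g x ∂μ := by
  obtain ⟨G, hGF, hGlt, hdisj, -, hset⟩ :=
    exists_pairwiseDisjoint_setOf_lt_supIndicator (c := c) hlam ht
  rw [hset, measure_biUnion_finset hdisj fun j hj => hs j (hGF hj), Finset.mul_sum,
    lintegral_biUnion_finset hdisj fun j hj => hs j (hGF hj)]
  refine Finset.sum_le_sum fun j hj => le_trans ?_ (hc j (hGF hj))
  gcongr
  rw [ENNReal.ofReal_le_iff_le_toReal ENNReal.coe_ne_top]
  exact (hGlt j hj).le

theorem sum_rpow_mul_le_of_isLaminarOn (hs : ∀ i ∈ F, MeasurableSet (s i))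
    (hμs : ∀ i ∈ F, μ (s i) ≠ ∞) (hlam : IsLaminarOn s F) {a : ι → ℝ≥0∞} {A : ℝ≥0∞}
    (hCar : ∀ j ∈ F, ∀ G ⊆ F, (∀ i ∈ G, s i ⊆ s j) → ∑ i ∈ G, a i ≤ A * μ (s j))
    {g : α → ℝ≥0∞} (hg : Measurable g)
    (hc : ∀ i ∈ F, (c i : ℝ≥0∞) * μ (s i) ≤ ∫⁻ x in s i, g x ∂μ) {p : ℝ} (hp : 1 < p) :
    ∑ i ∈ F, ENNReal.ofReal ((c i : ℝ) ^ p) * a i ≤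
      ENNReal.ofReal (p / (p - 1)) ^ p * A * ∫⁻ x, g x ^ p ∂μ := by
  have hp0 : 0 < p := by linarith
  set M : α → ℝ := fun x => supIndicator F s c x
  have hM : Measurable M := (measurable_supIndicator hs).coe_nnreal_real
  have hM0 : 0 ≤ M := fun x => NNReal.coe_nonneg _
  calc ∑ i ∈ F, ENNReal.ofReal ((c i : ℝ) ^ p) * a i
      = ENNReal.ofReal p *
          ∫⁻ t in Ioi 0, (∑ i ∈ F with t < (c i : ℝ), a i) * ENNReal.ofReal (t ^ (p - 1)) :=
        sum_ofReal_rpow_mul_eq_lintegral F (fun i => (c i).coe_nonneg) a hp0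
    _ ≤ ENNReal.ofReal p *
          ∫⁻ t in Ioi 0, A * μ {x | t < M x} * ENNReal.ofReal (t ^ (p - 1)) := by
        refine mul_le_mul_right (setLIntegral_mono' measurableSet_Ioi fun t (ht : 0 < t) => ?_) _
        gcongr
        exact sum_le_mul_measure_setOf_lt_supIndicator hs hlam hCar ht.le
    _ = A * ∫⁻ x, ENNReal.ofReal (M x ^ p) ∂μ := by
        have hanti : Antitone fun t : ℝ => μ {x | t < M x} :=
          fun t₁ t₂ ht => measure_mono fun x (hx : t₂ < M x) => ht.trans_lt hx
        have hmeas : Measurable fun t : ℝ => μ {x | t < M x} * ENNReal.ofReal (t ^ (p - 1)) :=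
          hanti.measurable.mul (by fun_prop)
        simp_rw [mul_assoc A]
        rw [lintegral_const_mul _ hmeas,
          lintegral_rpow_eq_lintegral_meas_lt_mul μ (ae_of_all _ hM0) hM.aemeasurable hp0]
        ring
    _ ≤ A * (ENNReal.ofReal (p / (p - 1)) ^ p * ∫⁻ x, g x ^ p ∂μ) := by
        gcongr
        exact lintegral_rpow_le_of_mul_meas_lt_le_setLIntegral hM0 hM hg hp
          (lintegral_supIndicator_rpow_ne_top hs hμs hp0)
          fun t ht => mul_measure_setOf_lt_supIndicator_le hs hlam hc ht.le
    _ = _ := by ring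

end Carleson

theorem MeasureTheory.ofReal_inv_toReal_mul_setIntegral_mul_le [MeasurableSpace α] {μ : Measure α}
    {s : Set α} {f : α → ℝ} (hf : 0 ≤ᵐ[μ.restrict s] f)
    (hfm : AEStronglyMeasurable f (μ.restrict s)) :
    ENNReal.ofReal ((μ s).toReal⁻¹ * ∫ x in s, f x ∂μ) * μ s ≤
      ∫⁻ x in s, ENNReal.ofReal (f x) ∂μ := by
  rcases eq_or_ne (μ s) ∞ with hs | hs
  · simp [hs]
  have hI : 0 ≤ ∫ x in s, f x ∂μ := integral_nonneg_of_ae hf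
  have hcancel : (μ s).toReal⁻¹ * (∫ x in s, f x ∂μ) * (μ s).toReal ≤ ∫ x in s, f x ∂μ := by
    rcases eq_or_ne (μ s).toReal 0 with h0 | h0
    · simpa [h0] using hI
    · rw [mul_comm _ (∫ x in s, f x ∂μ), mul_assoc, inv_mul_cancel₀ h0, mul_one]
  calc ENNReal.ofReal ((μ s).toReal⁻¹ * ∫ x in s, f x ∂μ) * μ s
      = ENNReal.ofReal ((μ s).toReal⁻¹ * (∫ x in s, f x ∂μ) * (μ s).toReal) := by
        rw [ENNReal.ofReal_mul' ENNReal.toReal_nonneg, ENNReal.ofReal_toReal hs]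
    _ ≤ ENNReal.ofReal (∫ x in s, f x ∂μ) := ENNReal.ofReal_le_ofReal hcancel
    _ ≤ ∫⁻ x in s, ENNReal.ofReal (f x) ∂μ := by
        rw [integral_eq_lintegral_of_nonneg_ae hf hfm]
        exact ENNReal.ofReal_toReal_le

theorem MeasureTheory.MemLp.lintegral_ofReal_rpow_eq [MeasurableSpace α]
    {μ : Measure α} {f : α → ℝ} {p : ℝ} (hfp : MemLp f (ENNReal.ofReal p) μ) (hf0 : 0 ≤ᵐ[μ] f)
    (hp : 0 < p) :
    ∫⁻ x, ENNReal.ofReal (f x) ^ p ∂μ = ENNReal.ofReal (∫ x, f x ^ p ∂μ) := by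
  have hint : Integrable (fun x => f x ^ p) μ := by
    refine (hfp.integrable_norm_rpow (by simpa using hp) ENNReal.ofReal_ne_top).congr ?_
    filter_upwards [hf0] with x hx
    rw [Real.norm_of_nonneg hx, ENNReal.toReal_ofReal hp.le]
  rw [ofReal_integral_eq_lintegral_ofReal hint (hf0.mono fun x hx => Real.rpow_nonneg hx p)]
  exact lintegral_congr_ae (hf0.mono fun x hx => ENNReal.ofReal_rpow_of_nonneg hx hp.le)

theorem floor_two_zpow_mul_eq_of_le {k l : ℤ} (hlk : l ≤ k) {x y : ℝ}
    (h : ⌊(2:ℝ) ^ k * x⌋ = ⌊(2:ℝ) ^ k * y⌋) : ⌊(2:ℝ) ^ l * x⌋ = ⌊(2:ℝ) ^ l * y⌋ := by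
  have hcoarsen : ∀ z : ℝ, ⌊(2:ℝ) ^ l * z⌋ = ⌊(2:ℝ) ^ k * z⌋ / (2 ^ (k - l).toNat : ℕ) := by
    intro z
    rw [← Int.floor_div_natCast]
    congr 1
    push_cast
    rw [← zpow_natCast, Int.toNat_of_nonneg (sub_nonneg.mpr hlk), mul_div_right_comm,
      ← zpow_sub₀ two_ne_zero, sub_sub_cancel]
  rw [hcoarsen, hcoarsen, h]

end

namespace CBD

namespace Cube

variable {N : ℕ}

theorem set_eq_pi (Q : Cube N) :
    Q.set = univ.pi fun i => Ico (Q.corner i) (Q.corner i + Q.side) := by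
  ext x
  simp [Cube.set, Set.mem_pi]

theorem measurableSet_set (Q : Cube N) : MeasurableSet Q.set := by
  rw [set_eq_pi]
  exact MeasurableSet.univ_pi fun _ => measurableSet_Ico

theorem measure_set_ne_top (μ : Measure (Fin N → ℝ)) [IsFiniteMeasureOnCompacts μ] (Q : Cube N) :
    μ Q.set ≠ ∞ := by
  refine ne_top_of_le_ne_top (isCompact_univ_pi fun _ => isCompact_Icc).measure_ne_top
    (measure_mono (?_ : Q.set ⊆ univ.pi fun i => Icc (Q.corner i) (Q.corner i + Q.side)))
  rw [set_eq_pi]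
  exact pi_mono fun _ _ => Ico_subset_Icc_self

theorem mem_set_iff_floor {Q : Cube N} {k : ℤ} {m : Fin N → ℤ} (hside : Q.side = (2:ℝ) ^ (-k))
    (hcorner : ∀ i, Q.corner i = (2:ℝ) ^ (-k) * m i) {x : Fin N → ℝ} :
    x ∈ Q.set ↔ ∀ i, ⌊(2:ℝ) ^ k * x i⌋ = m i := by
  have h2 : (0:ℝ) < 2 ^ k := by positivity
  refine forall_congr' fun i => ?_
  have hlo : Q.corner i = m i / 2 ^ k := by rw [hcorner, _root_.zpow_neg, inv_mul_eq_div]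
  have hhi : Q.corner i + Q.side = (m i + 1) / 2 ^ k := by
    rw [hlo, hside, _root_.zpow_neg, add_div, one_div]
  rw [Int.floor_eq_iff, ← div_le_iff₀' h2, ← lt_div_iff₀' h2, ← hlo, ← hhi]

theorem subset_or_disjoint_of_generation_le {I J : Cube N} {k l : ℤ} {m n : Fin N → ℤ}
    (hIs : I.side = (2:ℝ) ^ (-k)) (hIc : ∀ i, I.corner i = (2:ℝ) ^ (-k) * m i)
    (hJs : J.side = (2:ℝ) ^ (-l)) (hJc : ∀ i, J.corner i = (2:ℝ) ^ (-l) * n i) (hlk : l ≤ k) :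
    I.set ⊆ J.set ∨ Disjoint I.set J.set := by
  rw [or_iff_not_imp_right, not_disjoint_iff]
  rintro ⟨y, hyI, hyJ⟩ x hxI
  rw [mem_set_iff_floor hIs hIc] at hxI hyI
  rw [mem_set_iff_floor hJs hJc] at hyJ ⊢
  exact fun i => (floor_two_zpow_mul_eq_of_le hlk ((hxI i).trans (hyI i).symm)).trans (hyJ i)

theorem IsDyadic.subset_or_subset_or_disjoint {I J : Cube N} (hI : I.IsDyadic)
    (hJ : J.IsDyadic) : I.set ⊆ J.set ∨ J.set ⊆ I.set ∨ Disjoint I.set J.set := by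
  obtain ⟨k, m, hIs, hIc⟩ := hI
  obtain ⟨l, n, hJs, hJc⟩ := hJ
  rcases le_total l k with hlk | hkl
  · rcases subset_or_disjoint_of_generation_le hIs hIc hJs hJc hlk with h | h <;> tauto
  · rcases subset_or_disjoint_of_generation_le hJs hJc hIs hIc hkl with h | h
    · tauto
    · exact Or.inr (Or.inr h.symm)

end Cube

theorem measure_eq_zero_of_forall_isDyadic {N : ℕ} {μ : Measure (Fin N → ℝ)}
    (h : ∀ J : Cube N, J.IsDyadic → μ J.set = 0) : μ = 0 := by
  let unitCube (m : Fin N → ℤ) : Cube N := ⟨fun i => m i, 1, one_pos⟩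
  have hunit : ∀ m, (unitCube m).IsDyadic :=
    fun m => ⟨0, m, by simp [unitCube], by simp [unitCube]⟩
  have hcover : ⋃ m, (unitCube m).set = univ := by
    refine eq_univ_of_forall fun x => mem_iUnion.mpr ⟨fun i => ⌊x i⌋, ?_⟩
    rw [Cube.mem_set_iff_floor (k := 0) (m := fun i => ⌊x i⌋) (by simp [unitCube])
      (by simp [unitCube])]
    simp
  rw [← Measure.measure_univ_eq_zero, ← hcover]
  exact measure_iUnion_null fun m => h _ (hunit m)

theorem measure_eq_zero_of_carleson_const_neg {N : ℕ} {μ : Measure (Fin N → ℝ)}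
    [IsFiniteMeasureOnCompacts μ] {A : ℝ} (hA : A < 0)
    (h : ∀ J : Cube N, J.IsDyadic → 0 ≤ A * (μ J.set).toReal) : μ = 0 :=
  measure_eq_zero_of_forall_isDyadic fun J hJ =>
    ((ENNReal.toReal_eq_zero_iff _).mp (le_antisymm (nonpos_of_mul_nonneg_right (h J hJ) hA)
      ENNReal.toReal_nonneg)).resolve_right (J.measure_set_ne_top μ)

theorem sum_ofReal_rpow_mul_le_of_isDyadic {N : ℕ} {μ : Measure (Fin N → ℝ)}
    [IsFiniteMeasureOnCompacts μ] {F : Finset (Cube N)} (hF : ↑F ⊆ {I : Cube N | I.IsDyadic})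
    {a : Cube N → ℝ} (ha : ∀ I, 0 ≤ a I) {A : ℝ} (hA : 0 ≤ A)
    (hCar : ∀ J : Cube N, J.IsDyadic →
      ∀ F : Finset (Cube N), (↑F ⊆ {I : Cube N | I.IsDyadic ∧ I.set ⊆ J.set}) →
        ∑ I ∈ F, a I ≤ A * (μ J.set).toReal)
    {f : (Fin N → ℝ) → ℝ} (hf0 : ∀ x, 0 ≤ f x) (hfm : Measurable f) {p : ℝ} (hp : 1 < p) :
    ENNReal.ofReal (∑ I ∈ F, (((μ I.set).toReal)⁻¹ * ∫ x in I.set, f x ∂μ) ^ p * a I) ≤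
      ENNReal.ofReal (p / (p - 1)) ^ p * ENNReal.ofReal A * ∫⁻ x, ENNReal.ofReal (f x) ^ p ∂μ := by
  set c : Cube N → ℝ≥0 := fun I => (((μ I.set).toReal)⁻¹ * ∫ x in I.set, f x ∂μ).toNNReal
  have hc : ∀ I, (c I : ℝ) = ((μ I.set).toReal)⁻¹ * ∫ x in I.set, f x ∂μ := fun I =>
    Real.coe_toNNReal _ (mul_nonneg (inv_nonneg.mpr ENNReal.toReal_nonneg)
      (integral_nonneg hf0))
  simp_rw [← hc]
  rw [ENNReal.ofReal_sum_of_nonneg fun I _ => mul_nonneg (by positivity) (ha I)]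
  simp only [ENNReal.ofReal_mul' (ha _)]
  refine sum_rpow_mul_le_of_isLaminarOn (fun I _ => I.measurableSet_set)
    (fun I _ => I.measure_set_ne_top μ)
    (fun I hI J hJ => (hF hI).subset_or_subset_or_disjoint (hF hJ)) (fun J hJ G hGF hGJ => ?_)
    hfm.ennreal_ofReal (fun I _ => ofReal_inv_toReal_mul_setIntegral_mul_le (ae_of_all _ hf0)
      hfm.aestronglyMeasurable) hp
  rw [← ENNReal.ofReal_sum_of_nonneg fun I _ => ha I,
    ← ENNReal.ofReal_toReal (J.measure_set_ne_top μ), ← ENNReal.ofReal_mul hA]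
  exact ENNReal.ofReal_le_ofReal (hCar J (hF hJ) G fun I hI => ⟨hF (hGF hI), hGJ I hI⟩)

/-- Carleson Embedding Theorem with the sharp constant `(p')^p`:
if `Σ_{I ⊆ J, I ∈ D} a_I ≤ A μ(J)` for all `J ∈ D`, then for `f ≥ 0` and `1 < p < ∞`,
`Σ_{I ∈ D} (μ(I)⁻¹ ∫_I f dμ)^p a_I ≤ (p')^p A ‖f‖_{L^p(μ)}^p`
(terms with `μ(I) = 0` contribute `0`). -/
theorem carleson_embedding_theorem
    (N : ℕ) (μ : Measure (Fin N → ℝ)) (hRadon : μ.Regular)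
    (a : Cube N → ℝ) (ha : ∀ I : Cube N, 0 ≤ a I) (A : ℝ)
    (hCar : ∀ J : Cube N, J.IsDyadic →
      ∀ F : Finset (Cube N), (↑F ⊆ {I : Cube N | I.IsDyadic ∧ I.set ⊆ J.set}) →
        ∑ I ∈ F, a I ≤ A * (μ J.set).toReal)
    (p : ℝ) (hp : 1 < p)
    (f : (Fin N → ℝ) → ℝ) (hf0 : ∀ x, 0 ≤ f x) (hfm : Measurable f)
    (hfp : MemLp f (ENNReal.ofReal p) μ) :
    ∀ F : Finset (Cube N), (↑F ⊆ {I : Cube N | I.IsDyadic}) →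
      ∑ I ∈ F, (((μ I.set).toReal)⁻¹ * ∫ x in I.set, f x ∂μ) ^ p * a I
        ≤ (p / (p - 1)) ^ p * A * ∫ x, f x ^ p ∂μ := by
  intro F hF
  have hp0 : 0 < p := by linarith
  rcases lt_or_ge A 0 with hA | hA
  · obtain rfl : μ = 0 := measure_eq_zero_of_carleson_const_neg hA fun J hJ => by
      simpa using hCar J hJ ∅ (by simp)
    simp [Real.zero_rpow hp0.ne']
  have hq : 0 ≤ p / (p - 1) := div_nonneg hp0.le (by linarith)
  have hqp : 0 ≤ (p / (p - 1)) ^ p := Real.rpow_nonneg hq p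
  have hembed := sum_ofReal_rpow_mul_le_of_isDyadic hF ha hA hCar hf0 hfm hp
  rw [hfp.lintegral_ofReal_rpow_eq (ae_of_all _ hf0) hp0, ENNReal.ofReal_rpow_of_nonneg hq hp0.le,
    ← ENNReal.ofReal_mul hqp, ← ENNReal.ofReal_mul (mul_nonneg hqp hA)] at hembed
  exact (ENNReal.ofReal_le_ofReal_iff (mul_nonneg (mul_nonneg hqp hA)
    (integral_nonneg fun x => Real.rpow_nonneg (hf0 x) p))).mp hembed

end CBD
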